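/- arXiv:1506.06933 — 2 statements merged into one kernel-verified Lean document; each statement's English description precedes it below -/
import Mathlib

section
/- Completeness of JT_CS: for every constant specification CS for JT and every formula A, if A is not derivable in the Hilbert system JT_CS then there exists a Fitting model M for JT_CS and a world w in M such that M,w ⊮ A. -/
/-!
Canonical model argument. The worlds are the maximal consistent sets of `JT_CS` with
hypotheses, `Γ R Δ` holds when `Δ` contains every `B` with `t : B ∈ Γ`, and `t` is evidence
for `B` at `Γ` when `t : B ∈ Γ`. Since maximal consistent sets are closed under derivability,
axioms (A2), (A3) and the rule (AN!) make this evidence relation admissible, and (jt) makes `R`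
reflexive. With this choice of `E` the clause for `t : B` in the truth lemma is immediate, so
every maximal consistent set satisfies exactly its own members; a Lindenbaum extension of `{¬A}`
then refutes `A`.
-/

namespace JustificationLogic

/-- Justification terms: constants, variables, application, sum, and proof checker `!`. -/
inductive Term : Type
  | const : ℕ → Term
  | var : ℕ → Term
  | app : Term → Term → Term
  | sum : Term → Term → Term
  | bang : Term → Term
  deriving DecidableEq

/-- Formulas of justification logic: atoms, negation, implication, and `t : A`. -/
inductive Formula : Type
  | atom : ℕ → Formula
  | neg : Formula → Formula
  | impl : Formula → Formula → Formula
  | just : Term → Formula → Formula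
  deriving DecidableEq

/-- Disjunction, defined classically: `A ∨ B := ¬A → B`. -/
def Formula.or (A B : Formula) : Formula := (Formula.neg A).impl B

/-- Falsum, defined as the negation of a propositional tautology. -/
def Formula.falsum : Formula := Formula.neg ((Formula.atom 0).impl (Formula.atom 0))

/-- Number of symbols of a term. -/
def Term.size : Term → ℕ
  | .const _ => 1
  | .var _ => 1
  | .app s t => s.size + t.size + 1
  | .sum s t => s.size + t.size + 1
  | .bang t => t.size + 1

/-- Number of symbols of a formula. -/
def Formula.size : Formula → ℕ
  | .atom _ => 1
  | .neg A => A.size + 1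
  | .impl A B => A.size + B.size + 1
  | .just t A => t.size + A.size + 1

/-- An explicit numerical code for terms (an injective Gödel numbering). -/
def Term.code : Term → ℕ
  | .const n => Nat.pair 0 n
  | .var n => Nat.pair 1 n
  | .app s t => Nat.pair 2 (Nat.pair s.code t.code)
  | .sum s t => Nat.pair 3 (Nat.pair s.code t.code)
  | .bang t => Nat.pair 4 t.code

/-- An explicit numerical code for formulas (an injective Gödel numbering). -/
def Formula.code : Formula → ℕ
  | .atom n => Nat.pair 0 n
  | .neg A => Nat.pair 1 A.code
  | .impl A B => Nat.pair 2 (Nat.pair A.code B.code)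
  | .just t A => Nat.pair 3 (Nat.pair t.code A.code)

/-- Substitution of terms for term variables. -/
def Term.subst (σ : ℕ → Term) : Term → Term
  | .const n => .const n
  | .var n => σ n
  | .app s t => .app (s.subst σ) (t.subst σ)
  | .sum s t => .sum (s.subst σ) (t.subst σ)
  | .bang t => .bang (t.subst σ)

/-- Simultaneous substitution of terms for term variables and formulas for atoms. -/
def Formula.subst (σ : ℕ → Term) (τ : ℕ → Formula) : Formula → Formula
  | .atom n => τ n
  | .neg A => .neg (A.subst σ τ)
  | .impl A B => .impl (A.subst σ τ) (B.subst σ τ)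
  | .just t A => .just (t.subst σ) (A.subst σ τ)

/-- `towerT c n = !ⁿc`. -/
def towerT (c : Term) : ℕ → Term
  | 0 => c
  | n + 1 => Term.bang (towerT c n)

/-- `towerF c A n = !ⁿ⁻¹c : ⋯ : !c : c : A` (and `A` for `n = 0`), so that
`(towerT c n) : (towerF c A n)` is the `n`-th formula produced by the rule (AN!). -/
def towerF (c : Term) (A : Formula) : ℕ → Formula
  | 0 => A
  | n + 1 => Formula.just (towerT c n) (towerF c A n)

/-- The axioms of the justification logics considered, with switches `hd`, `ht`, `h4`
for the axioms (jd), (jt), (j4).  The propositional part (A1) is given by three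
standard Hilbert-style schemes axiomatizing classical propositional logic. -/
inductive Ax (hd ht h4 : Bool) : Formula → Prop
  | k (A B : Formula) : Ax hd ht h4 (A.impl (B.impl A))
  | s (A B C : Formula) :
      Ax hd ht h4 ((A.impl (B.impl C)).impl ((A.impl B).impl (A.impl C)))
  | dn (A B : Formula) :
      Ax hd ht h4 (((A.neg).impl (B.neg)).impl (B.impl A))
  | a2 (t s : Term) (A B : Formula) :
      Ax hd ht h4 ((Formula.just t (A.impl B)).impl
        ((Formula.just s A).impl (Formula.just (Term.app t s) B)))
  | a3 (t s : Term) (A : Formula) :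
      Ax hd ht h4 (((Formula.just t A).or (Formula.just s A)).impl
        (Formula.just (Term.sum t s) A))
  | jd (t : Term) : hd = true →
      Ax hd ht h4 ((Formula.just t Formula.falsum).impl Formula.falsum)
  | jt (t : Term) (A : Formula) : ht = true →
      Ax hd ht h4 ((Formula.just t A).impl A)
  | j4 (t : Term) (A : Formula) : h4 = true →
      Ax hd ht h4 ((Formula.just t A).impl
        (Formula.just (Term.bang t) (Formula.just t A)))

/-- Axioms of the respective logics. -/
def AxJ : Formula → Prop := Ax false false false
def AxJT : Formula → Prop := Ax false true false
def AxJD : Formula → Prop := Ax true false false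
def AxJ4 : Formula → Prop := Ax false false true
def AxJD4 : Formula → Prop := Ax true false true
def AxLP : Formula → Prop := Ax false true true

/-- `CS` is a constant specification for the logic with axioms `Axm`:
every member of `CS` is of the form `c : A` with `c` a constant and `A` an axiom. -/
def ConstSpec (Axm : Formula → Prop) (CS : Set Formula) : Prop :=
  ∀ F ∈ CS, ∃ (c : ℕ) (A : Formula), F = Formula.just (Term.const c) A ∧ Axm A

/-- `CS` is axiomatically appropriate for axioms `Axm`:
for every axiom `A` there is a constant `c` with `c : A ∈ CS`. -/
def AxApprop (Axm : Formula → Prop) (CS : Set Formula) : Prop :=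
  ∀ A : Formula, Axm A → ∃ c : ℕ, Formula.just (Term.const c) A ∈ CS

/-- `CS` is schematic: the set of axioms justified by a given constant consists of
axiom schemes, i.e. it is closed under simultaneous substitution of terms for term
variables and formulas for atomic propositions. -/
def Schematic (CS : Set Formula) : Prop :=
  ∀ (c : ℕ) (A : Formula), Formula.just (Term.const c) A ∈ CS →
    ∀ (σ : ℕ → Term) (τ : ℕ → Formula),
      Formula.just (Term.const c) (A.subst σ τ) ∈ CS

/-- `CS` is decidable: some computable function decides membership in `CS`
(via the explicit Gödel numbering of formulas). -/
def DecidableCS (CS : Set Formula) : Prop :=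
  ∃ C : ℕ → Bool, Computable C ∧ ∀ F : Formula, F ∈ CS ↔ C F.code = true

/-- Hilbert-style derivability with the iterated axiom necessitation rule (AN!):
from `c : A ∈ CS` infer `!ⁿc : !ⁿ⁻¹c : ⋯ : !c : c : A` for every `n ≥ 0`. -/
inductive DerivB (Axm : Formula → Prop) (CS : Set Formula) : Formula → Prop
  | ax {A : Formula} : Axm A → DerivB Axm CS A
  | mp {A B : Formula} : DerivB Axm CS (A.impl B) → DerivB Axm CS A → DerivB Axm CS B
  | an (c : ℕ) (A : Formula) (n : ℕ) :
      Formula.just (Term.const c) A ∈ CS →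
      DerivB Axm CS (Formula.just (towerT (Term.const c) n) (towerF (Term.const c) A n))

/-- Hilbert-style derivability with the simple axiom necessitation rule (AN):
from `c : A ∈ CS` infer `c : A`. -/
inductive DerivS (Axm : Formula → Prop) (CS : Set Formula) : Formula → Prop
  | ax {A : Formula} : Axm A → DerivS Axm CS A
  | mp {A B : Formula} : DerivS Axm CS (A.impl B) → DerivS Axm CS A → DerivS Axm CS B
  | an (c : ℕ) (A : Formula) :
      Formula.just (Term.const c) A ∈ CS →
      DerivS Axm CS (Formula.just (Term.const c) A)

/-- A structure for Fitting models: a nonempty set of worlds, an accessibility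
relation, an evidence relation and a valuation. -/
structure Model : Type 1 where
  World : Type
  nonempty : Nonempty World
  R : World → World → Prop
  E : Term → Formula → World → Prop
  val : ℕ → World → Prop

/-- The satisfaction relation `M, w ⊩ A`. -/
def Sat (M : Model) : Formula → M.World → Prop
  | .atom n, w => M.val n w
  | .neg A, w => ¬ Sat M A w
  | .impl A B, w => Sat M A w → Sat M B w
  | .just t A, w => M.E t A w ∧ ∀ v : M.World, M.R w v → Sat M A v

/-- The evidence relation of a model, as a set of triples. -/
def EvSet (M : Model) : Set (Term × Formula × M.World) :=
  {x | M.E x.1 x.2.1 x.2.2}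

/-- The graph of the valuation: the set `{(w, p) | w ∈ ν(p)}`. -/
def ValSet (M : Model) : Set (M.World × ℕ) :=
  {p | M.val p.2 p.1}

/-- Seriality of a relation: every world has a successor. -/
def Serial {W : Type} (R : W → W → Prop) : Prop := ∀ w : W, ∃ v : W, R w v

/-- Admissible evidence relation for the logics without the (j4) axiom:
closure under sum and application, and the constant specification condition
with iterated `!`. -/
def AdmissibleBang (CS : Set Formula) {W : Type}
    (E : Set (Term × Formula × W)) : Prop :=
  (∀ (s t : Term) (A : Formula) (w : W),
      ((s, A, w) ∈ E ∨ (t, A, w) ∈ E) → (Term.sum s t, A, w) ∈ E) ∧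
  (∀ (s t : Term) (A B : Formula) (w : W),
      (s, A.impl B, w) ∈ E → (t, A, w) ∈ E → (Term.app s t, B, w) ∈ E) ∧
  (∀ (c : ℕ) (A : Formula) (w : W) (n : ℕ),
      Formula.just (Term.const c) A ∈ CS →
      (towerT (Term.const c) n, towerF (Term.const c) A n, w) ∈ E)

/-- Admissible evidence relation for the logics with the (j4) axiom:
closure under sum and application, the simple constant specification condition,
closure under `!`, and monotonicity along the accessibility relation. -/
def AdmissibleJ4 (CS : Set Formula) {W : Type} (R : W → W → Prop)
    (E : Set (Term × Formula × W)) : Prop :=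
  (∀ (s t : Term) (A : Formula) (w : W),
      ((s, A, w) ∈ E ∨ (t, A, w) ∈ E) → (Term.sum s t, A, w) ∈ E) ∧
  (∀ (s t : Term) (A B : Formula) (w : W),
      (s, A.impl B, w) ∈ E → (t, A, w) ∈ E → (Term.app s t, B, w) ∈ E) ∧
  (∀ (c : ℕ) (A : Formula) (w : W),
      Formula.just (Term.const c) A ∈ CS → (Term.const c, A, w) ∈ E) ∧
  (∀ (t : Term) (A : Formula) (w : W),
      (t, A, w) ∈ E → (Term.bang t, Formula.just t A, w) ∈ E) ∧
  (∀ (t : Term) (A : Formula) (w v : W),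
      (t, A, w) ∈ E → R w v → (t, A, v) ∈ E)

/-- `M` is a Fitting model for `J_CS`. -/
def IsModelJ (CS : Set Formula) (M : Model) : Prop :=
  AdmissibleBang CS (EvSet M)

/-- `M` is a Fitting model for `JT_CS`: additionally `R` is reflexive. -/
def IsModelJT (CS : Set Formula) (M : Model) : Prop :=
  Reflexive M.R ∧ AdmissibleBang CS (EvSet M)

/-- `M` is a Fitting model for `JD_CS`: additionally `R` is serial. -/
def IsModelJD (CS : Set Formula) (M : Model) : Prop :=
  Serial M.R ∧ AdmissibleBang CS (EvSet M)

/-- `M` is a Fitting model for `J4_CS`: `R` is transitive. -/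
def IsModelJ4 (CS : Set Formula) (M : Model) : Prop :=
  Transitive M.R ∧ AdmissibleJ4 CS M.R (EvSet M)

/-- `M` is a Fitting model for `JD4_CS`: `R` is serial and transitive. -/
def IsModelJD4 (CS : Set Formula) (M : Model) : Prop :=
  Serial M.R ∧ Transitive M.R ∧ AdmissibleJ4 CS M.R (EvSet M)

/-- `M` is a Fitting model for `LP_CS`: `R` is reflexive and transitive. -/
def IsModelLP (CS : Set Formula) (M : Model) : Prop :=
  Reflexive M.R ∧ Transitive M.R ∧ AdmissibleJ4 CS M.R (EvSet M)

/-- `B` is a base for the evidence relation of `M`, and that evidence relation is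
minimal (least) among the admissible ones (non-(j4) version) containing `B`. -/
def MinBaseBang (CS : Set Formula) (M : Model)
    (B : Set (Term × Formula × M.World)) : Prop :=
  B ⊆ EvSet M ∧
  ∀ E' : Set (Term × Formula × M.World),
    AdmissibleBang CS E' → B ⊆ E' → EvSet M ⊆ E'

/-- `B` is a base for the evidence relation of `M`, and that evidence relation is
minimal (least) among the admissible ones ((j4) version) containing `B`. -/
def MinBaseJ4 (CS : Set Formula) (M : Model)
    (B : Set (Term × Formula × M.World)) : Prop :=
  B ⊆ EvSet M ∧
  ∀ E' : Set (Term × Formula × M.World),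
    AdmissibleJ4 CS M.R E' → B ⊆ E' → EvSet M ⊆ E'

/-- `M` is finitary (non-(j4) version): finitely many worlds, the evidence relation
is the minimal admissible one over some finite base, and the valuation has finite graph. -/
def FinitaryBang (CS : Set Formula) (M : Model) : Prop :=
  Finite M.World ∧
  (∃ B : Set (Term × Formula × M.World), B.Finite ∧ MinBaseBang CS M B) ∧
  (ValSet M).Finite

/-- `M` is finitary ((j4) version): finitely many worlds, the evidence relation
is the minimal admissible one over some finite base, and the valuation has finite graph. -/
def FinitaryJ4 (CS : Set Formula) (M : Model) : Prop :=
  Finite M.World ∧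
  (∃ B : Set (Term × Formula × M.World), B.Finite ∧ MinBaseJ4 CS M B) ∧
  (ValSet M).Finite

inductive Prov (Axm : Formula → Prop) (CS Γ : Set Formula) : Formula → Prop
  | hyp {A : Formula} : A ∈ Γ → Prov Axm CS Γ A
  | ax {A : Formula} : Axm A → Prov Axm CS Γ A
  | mp {A B : Formula} : Prov Axm CS Γ (A.impl B) → Prov Axm CS Γ A → Prov Axm CS Γ B
  | an (c : ℕ) (A : Formula) (n : ℕ) :
      Formula.just (Term.const c) A ∈ CS →
      Prov Axm CS Γ (Formula.just (towerT (Term.const c) n) (towerF (Term.const c) A n))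

namespace Prov

variable {Axm : Formula → Prop} {hd ht h4 : Bool} {CS Γ Δ : Set Formula} {A B : Formula}

theorem mono (h : Prov Axm CS Γ A) (hs : Γ ⊆ Δ) : Prov Axm CS Δ A := by
  induction h with
  | hyp h => exact hyp (hs h)
  | ax h => exact ax h
  | mp _ _ ih₁ ih₂ => exact mp ih₁ ih₂
  | an c A n h => exact an c A n h

theorem exists_finite_subset (h : Prov Axm CS Γ A) :
    ∃ Γ₀ ⊆ Γ, Γ₀.Finite ∧ Prov Axm CS Γ₀ A := by
  induction h with
  | @hyp C h => exact ⟨{C}, Set.singleton_subset_iff.2 h, Set.finite_singleton C, hyp rfl⟩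
  | ax h => exact ⟨∅, Set.empty_subset _, Set.finite_empty, ax h⟩
  | mp _ _ ih₁ ih₂ =>
    obtain ⟨Γ₁, hs₁, hf₁, hp₁⟩ := ih₁
    obtain ⟨Γ₂, hs₂, hf₂, hp₂⟩ := ih₂
    exact ⟨Γ₁ ∪ Γ₂, Set.union_subset hs₁ hs₂, hf₁.union hf₂,
      (hp₁.mono Set.subset_union_left).mp (hp₂.mono Set.subset_union_right)⟩
  | an c C n h => exact ⟨∅, Set.empty_subset _, Set.finite_empty, an c C n h⟩

theorem derivB_of_empty (h : Prov Axm CS ∅ A) : DerivB Axm CS A := by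
  induction h with
  | hyp h => exact absurd h (Set.notMem_empty _)
  | ax h => exact DerivB.ax h
  | mp _ _ ih₁ ih₂ => exact DerivB.mp ih₁ ih₂
  | an c C n h => exact DerivB.an c C n h

theorem imp_self (A : Formula) : Prov (Ax hd ht h4) CS Γ (A.impl A) :=
  ((ax (Ax.s A (A.impl A) A)).mp (ax (Ax.k A (A.impl A)))).mp (ax (Ax.k A A))

theorem deduction (h : Prov (Ax hd ht h4) CS (insert A Γ) B) :
    Prov (Ax hd ht h4) CS Γ (A.impl B) := by
  induction h with
  | @hyp C h =>
    rcases h with rfl | h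
    · exact imp_self C
    · exact (ax (Ax.k C A)).mp (hyp h)
  | @ax C h => exact (ax (Ax.k C A)).mp (ax h)
  | @mp C D _ _ ih₁ ih₂ => exact ((ax (Ax.s A C D)).mp ih₁).mp ih₂
  | an c C n h => exact (ax (Ax.k _ A)).mp (an c C n h)

theorem of_neg_neg (h : Prov (Ax hd ht h4) CS Γ A.neg.neg) : Prov (Ax hd ht h4) CS Γ A :=
  have h₁ : Prov (Ax hd ht h4) CS Γ (A.neg.neg.neg.neg.impl A.neg.neg) :=
    (ax (Ax.k A.neg.neg A.neg.neg.neg.neg)).mp h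
  have h₂ : Prov (Ax hd ht h4) CS Γ (A.neg.impl A.neg.neg.neg) :=
    (ax (Ax.dn A.neg.neg.neg A.neg)).mp h₁
  ((ax (Ax.dn A A.neg.neg)).mp h₂).mp h

theorem imp_of_neg (h : Prov (Ax hd ht h4) CS Γ A.neg) (B : Formula) :
    Prov (Ax hd ht h4) CS Γ (A.impl B) :=
  (ax (Ax.dn B A)).mp ((ax (Ax.k A.neg B.neg)).mp h)

theorem falsum_of_contra (h : Prov (Ax hd ht h4) CS Γ A) (hn : Prov (Ax hd ht h4) CS Γ A.neg) :
    Prov (Ax hd ht h4) CS Γ Formula.falsum :=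
  (imp_of_neg hn Formula.falsum).mp h

theorem neg_of_imp_falsum (h : Prov (Ax hd ht h4) CS Γ (A.impl Formula.falsum)) :
    Prov (Ax hd ht h4) CS Γ A.neg :=
  have hnn : Prov (Ax hd ht h4) CS Γ (A.neg.neg.impl Formula.falsum) :=
    deduction ((h.mono (Set.subset_insert _ _)).mp (of_neg_neg (hyp (Set.mem_insert _ _))))
  ((ax (Ax.dn A.neg ((Formula.atom 0).impl (Formula.atom 0)))).mp hnn).mp (imp_self _)

theorem or_inl (h : Prov (Ax hd ht h4) CS Γ A) (B : Formula) :
    Prov (Ax hd ht h4) CS Γ (A.or B) :=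
  deduction ((imp_of_neg (hyp (Set.mem_insert _ _)) B).mp (h.mono (Set.subset_insert _ _)))

theorem or_inr (h : Prov (Ax hd ht h4) CS Γ B) (A : Formula) :
    Prov (Ax hd ht h4) CS Γ (A.or B) :=
  (ax (Ax.k B A.neg)).mp h

end Prov

def Consistent (Axm : Formula → Prop) (CS Γ : Set Formula) : Prop :=
  ¬ Prov Axm CS Γ Formula.falsum

def MaximalConsistent (Axm : Formula → Prop) (CS Γ : Set Formula) : Prop :=
  Maximal (Consistent Axm CS) Γ

theorem consistent_neg_of_not_derivB {hd ht h4 : Bool} {CS : Set Formula} {A : Formula}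
    (hA : ¬ DerivB (Ax hd ht h4) CS A) : Consistent (Ax hd ht h4) CS {A.neg} := fun h =>
  hA (Prov.derivB_of_empty (Prov.of_neg_neg (Prov.neg_of_imp_falsum
    (Prov.deduction (h.mono (Set.singleton_subset_iff.2 (Set.mem_insert _ _)))))))

theorem exists_maximalConsistent_superset {Axm : Formula → Prop} {CS Γ : Set Formula}
    (h : Consistent Axm CS Γ) : ∃ Δ, Γ ⊆ Δ ∧ MaximalConsistent Axm CS Δ := by
  refine zorn_subset_nonempty {Δ | Consistent Axm CS Δ} (fun c hc hchain hne => ?_) Γ h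
  refine ⟨⋃₀ c, fun hf => ?_, fun _ => Set.subset_sUnion_of_mem⟩
  obtain ⟨Γ₀, hsub, hfin, hp⟩ := hf.exists_finite_subset
  obtain ⟨Δ, hΔ, hΓ₀⟩ :=
    hchain.directedOn.exists_mem_subset_of_finite_of_subset_sUnion hne hfin hsub
  exact hc hΔ (hp.mono hΓ₀)

namespace MaximalConsistent

variable {hd ht h4 : Bool} {CS Γ : Set Formula}

theorem mem_of_prov (hΓ : MaximalConsistent (Ax hd ht h4) CS Γ) {A : Formula}
    (h : Prov (Ax hd ht h4) CS Γ A) : A ∈ Γ :=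
  have hcon : Consistent (Ax hd ht h4) CS (insert A Γ) := fun hf =>
    hΓ.1 ((Prov.deduction hf).mp h)
  hΓ.2 hcon (Set.subset_insert _ _) (Set.mem_insert _ _)

theorem neg_mem_iff (hΓ : MaximalConsistent (Ax hd ht h4) CS Γ) (A : Formula) :
    A.neg ∈ Γ ↔ A ∉ Γ := by
  refine ⟨fun hn hA => hΓ.1 (Prov.falsum_of_contra (.hyp hA) (.hyp hn)), fun hA => ?_⟩
  have hincon : ¬ Consistent (Ax hd ht h4) CS (insert A Γ) := fun hcon =>
    hA (hΓ.2 hcon (Set.subset_insert _ _) (Set.mem_insert _ _))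
  exact hΓ.mem_of_prov (Prov.neg_of_imp_falsum (Prov.deduction (not_not.1 hincon)))

theorem impl_mem_iff (hΓ : MaximalConsistent (Ax hd ht h4) CS Γ) (A B : Formula) :
    A.impl B ∈ Γ ↔ (A ∈ Γ → B ∈ Γ) := by
  refine ⟨fun hi hA => hΓ.mem_of_prov ((Prov.hyp hi).mp (.hyp hA)), fun hi => ?_⟩
  by_cases hA : A ∈ Γ
  · exact hΓ.mem_of_prov ((Prov.ax (Ax.k B A)).mp (.hyp (hi hA)))
  · exact hΓ.mem_of_prov (Prov.imp_of_neg (.hyp ((hΓ.neg_mem_iff A).2 hA)) B)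

end MaximalConsistent

def CanonicalWorld (Axm : Formula → Prop) (CS : Set Formula) : Type :=
  {Γ : Set Formula // MaximalConsistent Axm CS Γ}

def canonicalModel (Axm : Formula → Prop) (CS : Set Formula)
    (h : Nonempty (CanonicalWorld Axm CS)) : Model where
  World := CanonicalWorld Axm CS
  nonempty := h
  R Γ Δ := ∀ (t : Term) (B : Formula), Formula.just t B ∈ Γ.1 → B ∈ Δ.1
  E t B Γ := Formula.just t B ∈ Γ.1
  val n Γ := Formula.atom n ∈ Γ.1

section CanonicalModel

variable {hd ht h4 : Bool} {CS : Set Formula} (h : Nonempty (CanonicalWorld (Ax hd ht h4) CS))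

theorem sat_canonicalModel_iff (A : Formula)
    (Γ : (canonicalModel (Ax hd ht h4) CS h).World) :
    Sat (canonicalModel (Ax hd ht h4) CS h) A Γ ↔ A ∈ Γ.1 := by
  induction A generalizing Γ with
  | atom n => exact Iff.rfl
  | neg B ih => exact (not_congr (ih Γ)).trans (Γ.2.neg_mem_iff B).symm
  | impl B C ih₁ ih₂ =>
    exact (imp_congr (ih₁ Γ) (ih₂ Γ)).trans (Γ.2.impl_mem_iff B C).symm
  | just t B ih => exact ⟨And.left, fun hm => ⟨hm, fun Δ hR => (ih Δ).2 (hR t B hm)⟩⟩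

theorem admissibleBang_canonicalModel :
    AdmissibleBang CS (EvSet (canonicalModel (Ax hd ht h4) CS h)) := by
  refine ⟨fun s t B Γ hst => ?_, fun s t B C Γ hBC hB => ?_, fun c B Γ n hc => ?_⟩
  · have hor : Prov (Ax hd ht h4) CS Γ.1 ((Formula.just s B).or (Formula.just t B)) :=
      hst.elim (fun hs => (Prov.hyp hs).or_inl _) (fun hs => (Prov.hyp hs).or_inr _)
    exact Γ.2.mem_of_prov ((Prov.ax (Ax.a3 s t B)).mp hor)
  · exact Γ.2.mem_of_prov (((Prov.ax (Ax.a2 s t B C)).mp (.hyp hBC)).mp (.hyp hB))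
  · exact Γ.2.mem_of_prov (Prov.an c B n hc)

end CanonicalModel

theorem canonicalModel_R_refl {hd h4 : Bool} {CS : Set Formula}
    (h : Nonempty (CanonicalWorld (Ax hd true h4) CS))
    (Γ : (canonicalModel (Ax hd true h4) CS h).World) :
    (canonicalModel (Ax hd true h4) CS h).R Γ Γ := fun t B hm =>
  Γ.2.mem_of_prov ((Prov.ax (Ax.jt t B rfl)).mp (.hyp hm))

theorem completeness_JT_general (CS : Set Formula) (A : Formula)
    (hA : ¬ DerivB AxJT CS A) :
    ∃ M : Model, IsModelJT CS M ∧ ∃ w : M.World, ¬ Sat M A w := by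
  obtain ⟨Δ, hsub, hΔ⟩ := exists_maximalConsistent_superset (consistent_neg_of_not_derivB hA)
  let w : CanonicalWorld AxJT CS := ⟨Δ, hΔ⟩
  refine ⟨canonicalModel AxJT CS ⟨w⟩,
    ⟨canonicalModel_R_refl ⟨w⟩, admissibleBang_canonicalModel ⟨w⟩⟩, w, ?_⟩
  exact fun hw => (hΔ.neg_mem_iff A).1 (hsub rfl) ((sat_canonicalModel_iff _ A w).1 hw)

/-- Completeness of `JT_CS`: if a formula is not derivable in the Hilbert system
`JT_CS` (with constant specification `CS`), then it fails at some world
of some Fitting model for `JT_CS`. -/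
theorem completeness_JT (CS : Set Formula) (hCS : ConstSpec AxJT CS) (A : Formula)
    (hA : ¬ DerivB AxJT CS A) :
    ∃ M : Model, IsModelJT CS M ∧ ∃ w : M.World, ¬ Sat M A w :=
  completeness_JT_general CS A hA

end JustificationLogic
end

section
/- Completeness of LP_CS with respect to finitary models: for every constant specification CS for LP and every formula A, if A is not derivable in the Hilbert system LP_CS then there exists a finitary Fitting model M for LP_CS and a world w in M such that M,w ⊮ A. -/
namespace JustificationLogic

section Completeness

/-! ### Auxiliary: context derivability -/

/-- Derivability from a set of hypotheses. -/
inductive Dv (CS : Set Formula) (Γ : Set Formula) : Formula → Prop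
  | ax {A : Formula} : AxLP A → Dv CS Γ A
  | an {c : ℕ} {A : Formula} : Formula.just (Term.const c) A ∈ CS →
      Dv CS Γ (Formula.just (Term.const c) A)
  | hyp {A : Formula} : A ∈ Γ → Dv CS Γ A
  | mp {A B : Formula} : Dv CS Γ (A.impl B) → Dv CS Γ A → Dv CS Γ B

variable {CS : Set Formula}

lemma dv_mono {Γ Γ' : Set Formula} (h : Γ ⊆ Γ') {B : Formula} (hd : Dv CS Γ B) :
    Dv CS Γ' B := by
  induction hd with
  | ax h => exact Dv.ax h
  | an h => exact Dv.an h
  | hyp h' => exact Dv.hyp (h h')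
  | mp _ _ ih1 ih2 => exact Dv.mp ih1 ih2

lemma dv_of_derivS {B : Formula} (h : DerivS AxLP CS B) {Γ : Set Formula} : Dv CS Γ B := by
  induction h with
  | ax h => exact Dv.ax h
  | mp _ _ ih1 ih2 => exact Dv.mp ih1 ih2
  | an c A h => exact Dv.an h

lemma derivS_of_dv {B : Formula} (h : Dv CS ∅ B) : DerivS AxLP CS B := by
  induction h with
  | ax h => exact DerivS.ax h
  | an h => exact DerivS.an _ _ h
  | hyp h => exact absurd h (Set.notMem_empty _)
  | mp _ _ ih1 ih2 => exact DerivS.mp ih1 ih2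

lemma dv_id {Γ : Set Formula} (B : Formula) : Dv CS Γ (B.impl B) :=
  Dv.mp (Dv.mp (Dv.ax (Ax.s B (B.impl B) B)) (Dv.ax (Ax.k B (B.impl B))))
    (Dv.ax (Ax.k B B))

lemma dv_w {Γ : Set Formula} {C : Formula} (h : Dv CS Γ C) (B : Formula) :
    Dv CS Γ (B.impl C) :=
  Dv.mp (Dv.ax (Ax.k C B)) h

/-- Deduction theorem. -/
lemma dv_deduction {Γ : Set Formula} {B C : Formula}
    (h : Dv CS (insert B Γ) C) : Dv CS Γ (B.impl C) := by
  induction h with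
  | ax h => exact dv_w (Dv.ax h) B
  | an h => exact dv_w (Dv.an h) B
  | hyp h =>
    rcases h with h | h
    · subst h; exact dv_id _
    · exact dv_w (Dv.hyp h) B
  | mp _ _ ih1 ih2 =>
    exact Dv.mp (Dv.mp (Dv.ax (Ax.s _ _ _)) ih1) ih2

/-- Explosion: from `X` and `¬X` derive anything. -/
lemma dv_explosion {Γ : Set Formula} {X : Formula} (h1 : Dv CS Γ X)
    (h2 : Dv CS Γ X.neg) (C : Formula) : Dv CS Γ C := by
  have h3 : Dv CS Γ ((C.neg).impl X.neg) := Dv.mp (Dv.ax (Ax.k X.neg C.neg)) h2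
  have h4 : Dv CS Γ (X.impl C) := Dv.mp (Dv.ax (Ax.dn C X)) h3
  exact Dv.mp h4 h1

/-- From `¬X → ⊥` infer `X`. -/
lemma dv_of_neg_falsum {Γ : Set Formula} {X : Formula}
    (h : Dv CS Γ ((X.neg).impl Formula.falsum)) : Dv CS Γ X := by
  have h2 : Dv CS Γ (((Formula.atom 0).impl (Formula.atom 0)).impl X) :=
    Dv.mp (Dv.ax (Ax.dn X ((Formula.atom 0).impl (Formula.atom 0)))) h
  exact Dv.mp h2 (dv_id _)

/-- Consistency of a set of hypotheses. -/
def Con (CS : Set Formula) (Γ : Set Formula) : Prop := ¬ Dv CS Γ Formula.falsum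

lemma dv_compact {Γ : Set Formula} {B : Formula} (h : Dv CS Γ B) :
    ∃ L : List Formula, (∀ C ∈ L, C ∈ Γ) ∧ Dv CS {C | C ∈ L} B := by
  induction h with
  | ax h => exact ⟨[], by simp, Dv.ax h⟩
  | an h => exact ⟨[], by simp, Dv.an h⟩
  | @hyp A h => exact ⟨[A], by simpa using h, Dv.hyp (by simp)⟩
  | @mp A B _ _ ih1 ih2 =>
    obtain ⟨L1, hL1, hd1⟩ := ih1
    obtain ⟨L2, hL2, hd2⟩ := ih2
    refine ⟨L1 ++ L2, ?_, ?_⟩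
    · intro C hC; rcases List.mem_append.1 hC with h | h
      · exact hL1 C h
      · exact hL2 C h
    · exact Dv.mp (dv_mono (fun C hC => by simp [List.mem_append]; exact Or.inl hC) hd1)
        (dv_mono (fun C hC => by simp [List.mem_append]; exact Or.inr hC) hd2)

lemma lindenbaum {Γ : Set Formula} (h : Con CS Γ) :
    ∃ Δ, Γ ⊆ Δ ∧ Con CS Δ ∧ ∀ Δ', Con CS Δ' → Δ ⊆ Δ' → Δ' ⊆ Δ := by
  have H : ∀ c ⊆ {Δ | Con CS Δ}, IsChain (· ⊆ ·) c → c.Nonempty →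
      ∃ ub ∈ {Δ | Con CS Δ}, ∀ s ∈ c, s ⊆ ub := by
      intro c hc hchain hcne
      refine ⟨⋃₀ c, ?_, fun s hs => Set.subset_sUnion_of_mem hs⟩
      intro hd
      obtain ⟨L, hL, hdL⟩ := dv_compact hd
      -- find a member of the chain containing all of L
      have : ∀ L' : List Formula, (∀ C ∈ L', C ∈ ⋃₀ c) → ∃ Δ ∈ c, ∀ C ∈ L', C ∈ Δ := by
        intro L'
        induction L' with
        | nil =>
          intro _
          obtain ⟨Δ, hΔ⟩ := hcne
          exact ⟨Δ, hΔ, by simp⟩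
        | cons x L ih =>
          intro hall
          obtain ⟨Δ, hΔc, hΔ⟩ := ih (fun C hC => hall C (by simp [hC]))
          obtain ⟨Δx, hΔxc, hx⟩ := hall x (by simp)
          rcases hchain.total hΔc hΔxc with hsub | hsub
          · exact ⟨Δx, hΔxc, fun C hC => by
              rcases List.mem_cons.1 hC with h | h
              · exact h ▸ hx
              · exact hsub (hΔ C h)⟩
          · exact ⟨Δ, hΔc, fun C hC => by
              rcases List.mem_cons.1 hC with h | h
              · exact h ▸ hsub hx
              · exact hΔ C h⟩
      obtain ⟨Δ, hΔc, hall⟩ := this L hL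
      exact hc hΔc (dv_mono (fun C hC => hall C hC) hdL)
  obtain ⟨m, hm1, hm2⟩ := zorn_subset_nonempty {Δ | Con CS Δ} H Γ h
  exact ⟨m, hm1, hm2.1, fun Δ' h1 h2 => hm2.2 h1 h2⟩

/-! ### Maximal consistent sets -/

variable {Δ : Set Formula}

structure MCS (CS Δ : Set Formula) : Prop where
  con : Con CS Δ
  max : ∀ Δ', Con CS Δ' → Δ ⊆ Δ' → Δ' ⊆ Δ

lemma MCS.mem_of_dv (hΔ : MCS CS Δ) {B : Formula} (h : Dv CS Δ B) : B ∈ Δ := by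
  have hcon : Con CS (insert B Δ) := by
    intro hd
    exact hΔ.con (Dv.mp (dv_deduction hd) h)
  exact hΔ.max _ hcon (Set.subset_insert _ _) (Set.mem_insert _ _)

lemma MCS.neg_mem (hΔ : MCS CS Δ) {B : Formula} : B.neg ∈ Δ ↔ B ∉ Δ := by
  constructor
  · intro h1 h2
    exact hΔ.con (dv_explosion (Dv.hyp h2) (Dv.hyp h1) _)
  · intro h1
    have hcon : Con CS (insert B.neg Δ) := by
      intro hd
      exact h1 (hΔ.mem_of_dv (dv_of_neg_falsum (dv_deduction hd)))
    exact hΔ.max _ hcon (Set.subset_insert _ _) (Set.mem_insert _ _)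

lemma MCS.impl_mem (hΔ : MCS CS Δ) {B C : Formula} :
    B.impl C ∈ Δ ↔ (B ∈ Δ → C ∈ Δ) := by
  constructor
  · intro h hB
    exact hΔ.mem_of_dv (Dv.mp (Dv.hyp h) (Dv.hyp hB))
  · intro h
    by_cases hB : B ∈ Δ
    · exact hΔ.mem_of_dv (dv_w (Dv.hyp (h hB)) B)
    · have hnB : B.neg ∈ Δ := hΔ.neg_mem.2 hB
      have h1 : Dv CS Δ ((C.neg).impl B.neg) := Dv.mp (Dv.ax (Ax.k B.neg C.neg)) (Dv.hyp hnB)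
      exact hΔ.mem_of_dv (Dv.mp (Dv.ax (Ax.dn C B)) h1)

/-! ### Subformulas -/

def subf : Formula → List Formula
  | .atom n => [.atom n]
  | .neg B => .neg B :: subf B
  | .impl B C => .impl B C :: (subf B ++ subf C)
  | .just t B => .just t B :: subf B

lemma subf_self (B : Formula) : B ∈ subf B := by
  cases B <;> simp [subf]

lemma subf_trans {A B C : Formula} (h1 : B ∈ subf A) (h2 : C ∈ subf B) : C ∈ subf A := by
  induction A with
  | atom n => simp [subf] at h1; subst h1; exact h2
  | neg D ih =>
    rcases (by simpa [subf] using h1 : B = D.neg ∨ B ∈ subf D) with h | h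
    · subst h; exact h2
    · simp [subf]; right; simpa using ih h
  | impl D E ih1 ih2 =>
    rcases (by simpa [subf] using h1 : B = D.impl E ∨ B ∈ subf D ∨ B ∈ subf E) with h | h | h
    · subst h; exact h2
    · simp [subf]; exact Or.inr (Or.inl (ih1 h))
    · simp [subf]; exact Or.inr (Or.inr (ih2 h))
  | just t D ih =>
    rcases (by simpa [subf] using h1 : B = Formula.just t D ∨ B ∈ subf D) with h | h
    · subst h; exact h2
    · simp [subf]; right; exact ih h

/-! ### Minimal evidence closure over a one-world frame -/

inductive Clo (CS : Set Formula) (Bs : Set (Term × Formula × Unit)) :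
    Term → Formula → Unit → Prop
  | base {t C w} : (t, C, w) ∈ Bs → Clo CS Bs t C w
  | suml {s t : Term} {C : Formula} {w} :
      Clo CS Bs s C w → Clo CS Bs (Term.sum s t) C w
  | sumr {s t : Term} {C : Formula} {w} :
      Clo CS Bs t C w → Clo CS Bs (Term.sum s t) C w
  | app {s t : Term} {C D : Formula} {w} :
      Clo CS Bs s (C.impl D) w → Clo CS Bs t C w → Clo CS Bs (Term.app s t) D w
  | const {c : ℕ} {C : Formula} {w} :
      Formula.just (Term.const c) C ∈ CS → Clo CS Bs (Term.const c) C w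
  | bang {t : Term} {C : Formula} {w} :
      Clo CS Bs t C w → Clo CS Bs (Term.bang t) (Formula.just t C) w

lemma clo_min {Bs : Set (Term × Formula × Unit)} {R : Unit → Unit → Prop}
    {E' : Set (Term × Formula × Unit)} (hE' : AdmissibleJ4 CS R E') (hB : Bs ⊆ E')
    {t : Term} {C : Formula} {w : Unit} (h : Clo CS Bs t C w) : (t, C, w) ∈ E' := by
  induction h with
  | base h => exact hB h
  | suml h ih => exact hE'.1 _ _ _ _ (Or.inl ih)
  | sumr h ih => exact hE'.1 _ _ _ _ (Or.inr ih)
  | app _ _ ih1 ih2 => exact hE'.2.1 _ _ _ _ _ ih1 ih2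
  | const h => exact hE'.2.2.1 _ _ _ h
  | bang _ ih => exact hE'.2.2.2.1 _ _ _ ih

end Completeness

/-! ### The one-world countermodel -/

def ctrBase (A : Formula) (Δ : Set Formula) : Set (Term × Formula × Unit) :=
  {x | Formula.just x.1 x.2.1 ∈ subf A ∧ Formula.just x.1 x.2.1 ∈ Δ}

def ctrModel (CS : Set Formula) (A : Formula) (Δ : Set Formula) : Model where
  World := Unit
  nonempty := ⟨()⟩
  R := fun _ _ => True
  E := fun t C w => Clo CS (ctrBase A Δ) t C w
  val := fun n _ => Formula.atom n ∈ subf A ∧ Formula.atom n ∈ Δ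

variable {CS Δ : Set Formula} {A : Formula}

/-- The evidence set induced by `Δ` is admissible. -/
lemma admissible_EΔ (hΔ : MCS CS Δ) (R : Unit → Unit → Prop) :
    AdmissibleJ4 CS R {x : Term × Formula × Unit | Formula.just x.1 x.2.1 ∈ Δ} := by
  refine ⟨?_, ?_, ?_, ?_, ?_⟩
  · rintro s t C w (h | h)
    · have hor : Dv CS Δ ((Formula.just s C).or (Formula.just t C)) :=
        dv_deduction (dv_explosion (dv_mono (Set.subset_insert _ _) (Dv.hyp h))
          (Dv.hyp (Set.mem_insert _ _)) _)
      exact hΔ.mem_of_dv (Dv.mp (Dv.ax (Ax.a3 s t C)) hor)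
    · have hor : Dv CS Δ ((Formula.just s C).or (Formula.just t C)) :=
        dv_w (Dv.hyp h) _
      exact hΔ.mem_of_dv (Dv.mp (Dv.ax (Ax.a3 s t C)) hor)
  · intro s t C D w h1 h2
    exact hΔ.mem_of_dv (Dv.mp (Dv.mp (Dv.ax (Ax.a2 s t C D)) (Dv.hyp h1)) (Dv.hyp h2))
  · intro c C w h
    exact hΔ.mem_of_dv (Dv.an h)
  · intro t C w h
    exact hΔ.mem_of_dv (Dv.mp (Dv.ax (Ax.j4 t C rfl)) (Dv.hyp h))
  · intro t C w v h _
    exact h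

lemma mem_of_clo (hΔ : MCS CS Δ) {t : Term} {C : Formula} {w : Unit}
    (h : Clo CS (ctrBase A Δ) t C w) : Formula.just t C ∈ Δ :=
  clo_min (admissible_EΔ hΔ (fun _ _ => True)) (fun x hx => hx.2) h

/-- Truth lemma. -/
lemma truth_lemma (hΔ : MCS CS Δ) (C : Formula) (hC : C ∈ subf A) :
    Sat (ctrModel CS A Δ) C () ↔ C ∈ Δ := by
  induction C with
  | atom n =>
    simp only [Sat, ctrModel]
    exact ⟨fun h => h.2, fun h => ⟨hC, h⟩⟩
  | neg B ih =>
    have hB : B ∈ subf A := subf_trans hC (by simp [subf, subf_self])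
    simp only [Sat]
    rw [ih hB, hΔ.neg_mem]
  | impl B C ih1 ih2 =>
    have hB : B ∈ subf A := subf_trans hC (by simp [subf, subf_self])
    have hC' : C ∈ subf A := subf_trans hC (by simp [subf, subf_self])
    simp only [Sat]
    rw [ih1 hB, ih2 hC', hΔ.impl_mem]
  | just t B ih =>
    have hB : B ∈ subf A := subf_trans hC (by simp [subf, subf_self])
    constructor
    · intro h
      exact mem_of_clo hΔ h.1
    · intro h
      refine ⟨Clo.base ⟨hC, h⟩, ?_⟩
      intro v _
      have : B ∈ Δ := hΔ.mem_of_dv (Dv.mp (Dv.ax (Ax.jt t B rfl)) (Dv.hyp h))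
      exact ((ih hB).2 this)

/-- Completeness of `LP_CS` with respect to finitary models: if a formula is not
derivable in the Hilbert system `LP_CS` (with constant specification `CS`),
then it fails at some world of some finitary Fitting model for `LP_CS`. -/
theorem finitary_completeness_LP (CS : Set Formula) (hCS : ConstSpec AxLP CS) (A : Formula)
    (hA : ¬ DerivS AxLP CS A) :
    ∃ M : Model, IsModelLP CS M ∧ FinitaryJ4 CS M ∧ ∃ w : M.World, ¬ Sat M A w := by
  have hCon : Con CS (insert A.neg ∅) := fun hd =>
    hA (derivS_of_dv (dv_of_neg_falsum (dv_deduction hd)))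
  obtain ⟨Δ, hsub, hcon, hmax⟩ := lindenbaum hCon
  have hΔ : MCS CS Δ := ⟨hcon, hmax⟩
  have hAneg : A.neg ∈ Δ := hsub (Set.mem_insert _ _)
  have hAnot : A ∉ Δ := fun h => hcon (dv_explosion (Dv.hyp h) (Dv.hyp hAneg) _)
  refine ⟨ctrModel CS A Δ, ⟨?_, ?_, ?_⟩, ⟨?_, ⟨ctrBase A Δ, ?_, ?_, ?_⟩, ?_⟩, (), ?_⟩
  · -- reflexive
    intro w; trivial
  · -- transitive
    intro a b c _ _; trivial
  · -- admissibility of the evidence set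
    refine ⟨?_, ?_, ?_, ?_, ?_⟩
    · rintro s t C w (h | h)
      · exact Clo.suml h
      · exact Clo.sumr h
    · intro s t C D w h1 h2; exact Clo.app h1 h2
    · intro c C w h; exact Clo.const h
    · intro t C w h; exact Clo.bang h
    · intro t C w v h _; cases w; cases v; exact h
  · -- finite worlds
    exact inferInstanceAs (Finite Unit)
  · -- finite base
    have himg : ((fun x : Term × Formula × Unit => Formula.just x.1 x.2.1) ''
        ctrBase A Δ).Finite := by
      refine Set.Finite.subset (List.finite_toSet (subf A)) ?_
      rintro F ⟨x, hx, rfl⟩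
      exact hx.1
    refine Set.Finite.of_finite_image himg ?_
    rintro ⟨t1, C1, w1⟩ _ ⟨t2, C2, w2⟩ _ h
    cases w1; cases w2
    simp only [Formula.just.injEq] at h
    simp [h.1, h.2]
  · -- base included in evidence set
    intro x hx
    exact Clo.base hx
  · -- minimality
    intro E' hE' hB x hx
    exact clo_min hE' hB hx
  · -- finite valuation graph
    have himg : ((fun p : Unit × ℕ => Formula.atom p.2) ''
        ValSet (ctrModel CS A Δ)).Finite := by
      refine Set.Finite.subset (List.finite_toSet (subf A)) ?_
      rintro F ⟨x, hx, rfl⟩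
      exact hx.1
    refine Set.Finite.of_finite_image himg ?_
    rintro ⟨w1, n1⟩ _ ⟨w2, n2⟩ _ h
    cases w1; cases w2
    simp only [Formula.atom.injEq] at h
    simp [h]
  · -- A fails at the world
    rw [truth_lemma hΔ A (subf_self A)]
    exact hAnot

end JustificationLogic
end
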